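/- arXiv:1407.4286 — 2 statements merged into one kernel-verified Lean document; each statement's English description precedes it below -/
import Mathlib

section
/- There exist constants c₁, c₂, c₃, c₄ > 0 and a family of trees (t_n)_{n≥2} over the ranked alphabet {a, b, c} with rank(a) = 0, rank(b) = 1, rank(c) = 2, such that for all sufficiently large n: (i) c₁·n ≤ |t_n| ≤ c₂·n; (ii) c₃·log₂(n) ≤ depth(t_n) ≤ c₄·log₂(n); and (iii) the minimal dag of t_n has size at least n, i.e., t_n has at least n pairwise non-isomorphic subtrees. -/
universe u v

/-- Finite rooted ordered labelled trees. -/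
inductive RTree (L : Type u) : Type u
  | node : L → List (RTree L) → RTree L

namespace RTree

/-- The number of nodes of a tree. -/
def size {L : Type u} : RTree L → ℕ
  | .node _ ts => 1 + (ts.attach.map (fun x => x.1.size)).sum
termination_by t => sizeOf t
decreasing_by simp_wf; have := List.sizeOf_lt_of_mem x.2; omega

/-- The list of labels of the nodes of a tree. -/
def labelsList {L : Type u} : RTree L → List L
  | .node f ts => f :: (ts.attach.map (fun x => x.1.labelsList)).flatten
termination_by t => sizeOf t
decreasing_by simp_wf; have := List.sizeOf_lt_of_mem x.2; omega

/-- The depth of a tree: the maximal number of edges on a path from the root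
to a leaf. -/
def depth {L : Type u} : RTree L → ℕ
  | .node _ ts => (ts.attach.map (fun x => x.1.depth + 1)).foldr max 0
termination_by t => sizeOf t
decreasing_by simp_wf; have := List.sizeOf_lt_of_mem x.2; omega

/-- `Subtree s t` holds iff `s` is the subtree of `t` rooted at some node
of `t`. -/
inductive Subtree {L : Type u} : RTree L → RTree L → Prop
  | refl (t : RTree L) : Subtree t t
  | child {s t : RTree L} {f : L} {ts : List (RTree L)} :
      t ∈ ts → Subtree s t → Subtree s (.node f ts)

/-- A tree is well-formed over a ranked alphabet if every node labelled by a
symbol of rank `k` has exactly `k` children. -/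
inductive WF {L : Type u} (rk : L → ℕ) : RTree L → Prop
  | node {f : L} {ts : List (RTree L)} :
      ts.length = rk f → (∀ t ∈ ts, WF rk t) → WF rk (.node f ts)

end RTree

/-- The ranked alphabet `{a, b, c}` with `rank(a) = 0`, `rank(b) = 1`,
`rank(c) = 2`. -/
inductive ABC : Type
  | a | b | c

/-- The rank function of the alphabet `{a, b, c}`. -/
def ABC.rk : ABC → ℕ
  | .a => 0
  | .b => 1
  | .c => 2


/-!
Below the leaves of the complete binary tree of `c`-nodes of depth `m`, hang at the leaf with
address `w ∈ {0,1}^m` the chain encoding `ww` (a `b` for each `0`, a `c` with an extra `a`-leaf for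
each `1`). This tree has `Θ(m 2^m)` nodes and depth `3m`, and the `m 2^m` suffixes of the chains
of length greater than `m` are pairwise distinct, because such a suffix determines both its length
and its last `m` letters `w`. Taking `m` least with `n ≤ m 2^m` gives `Θ(n)` nodes, depth
`Θ(log n)` and at least `n` distinct subtrees.
-/

namespace RTree

variable {L : Type u}

@[simp]
theorem size_node (f : L) (ts : List (RTree L)) :
    (node f ts).size = 1 + (ts.map size).sum := by
  rw [size, List.attach_map_val]

@[simp]
theorem depth_node (f : L) (ts : List (RTree L)) :
    (node f ts).depth = (ts.map (depth · + 1)).foldr max 0 := by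
  rw [depth, List.attach_map_val (l := ts) (f := (depth · + 1))]

theorem Subtree.trans {s t r : RTree L} (hst : s.Subtree t) (htr : t.Subtree r) :
    s.Subtree r := by
  induction htr with
  | refl => exact hst
  | child hmem _ ih => exact .child hmem ih

theorem subtree_node_iff {s : RTree L} {f : L} {ts : List (RTree L)} :
    s.Subtree (node f ts) ↔ s = node f ts ∨ ∃ t ∈ ts, s.Subtree t := by
  constructor
  · rintro (_ | ⟨hmem, hsub⟩)
    exacts [.inl rfl, .inr ⟨_, hmem, hsub⟩]
  · rintro (rfl | ⟨t, hmem, hsub⟩)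
    exacts [.refl _, .child hmem hsub]

theorem finite_setOf_subtree : ∀ t : RTree L, {s : RTree L | s.Subtree t}.Finite
  | node f ts => by
    have hunion : {s : RTree L | s.Subtree (node f ts)} =
        insert (node f ts) (⋃ t ∈ ts, {s : RTree L | s.Subtree t}) := by
      ext s
      simp [subtree_node_iff]
    rw [hunion]
    exact (ts.finite_toSet.biUnion fun t _ => finite_setOf_subtree t).insert _
termination_by t => sizeOf t
decreasing_by simp_wf; have := List.sizeOf_lt_of_mem ‹_›; omega

end RTree

open RTree

def bitChain : List Bool → RTree ABC
  | [] => .node .a []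
  | false :: w => .node .b [bitChain w]
  | true :: w => .node .c [bitChain w, .node .a []]

/-- `p` accumulates the reversed address of the current node: the leaf of `chainTree k p` with
reversed address `l` is `bitChain ((l ++ p) ++ (l ++ p))`. -/
def chainTree : ℕ → List Bool → RTree ABC
  | 0, p => bitChain (p ++ p)
  | k + 1, p => .node .c [chainTree k (false :: p), chainTree k (true :: p)]

theorem bitChain_wf (w : List Bool) : (bitChain w).WF ABC.rk := by
  induction w with
  | nil => exact .node rfl (by simp)
  | cons x w ih =>
    cases x
    · exact .node rfl (by simpa using ih)
    · exact .node rfl (by simpa using ⟨ih, .node rfl (by simp)⟩)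

theorem chainTree_wf (k : ℕ) (p : List Bool) : (chainTree k p).WF ABC.rk := by
  induction k generalizing p with
  | zero => exact bitChain_wf _
  | succ k ih => exact .node rfl (by simpa using ⟨ih _, ih _⟩)

theorem length_lt_size_bitChain (w : List Bool) : w.length < (bitChain w).size := by
  induction w with
  | nil => simp [bitChain]
  | cons x w ih => cases x <;>
      simp only [bitChain, size_node, List.map_cons, List.map_nil, List.sum_cons, List.sum_nil,
        List.length_cons] <;> omega

theorem size_bitChain_le (w : List Bool) : (bitChain w).size ≤ 2 * w.length + 1 := by
  induction w with
  | nil => simp [bitChain]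
  | cons x w ih => cases x <;>
      simp only [bitChain, size_node, List.map_cons, List.map_nil, List.sum_cons, List.sum_nil,
        List.length_cons] <;> omega

theorem depth_bitChain (w : List Bool) : (bitChain w).depth = w.length := by
  induction w with
  | nil => simp [bitChain]
  | cons x w ih => cases x <;> simp [bitChain, ih]

theorem bitChain_injective : Function.Injective bitChain := by
  intro v w h
  induction v generalizing w with
  | nil => cases w with
    | nil => rfl
    | cons y w => cases y <;> cases h
  | cons x v ih => cases w with
    | nil => cases x <;> cases h
    | cons y w => cases x <;> cases y <;> simp [bitChain] at h ⊢ <;> exact ih h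

theorem bitChain_drop_subtree (w : List Bool) (j : ℕ) :
    (bitChain (w.drop j)).Subtree (bitChain w) := by
  induction w generalizing j with
  | nil => rw [List.drop_nil]; exact .refl _
  | cons x w ih =>
    cases j with
    | zero => exact .refl _
    | succ j => cases x <;> exact .child (by simp) (ih j)

theorem bitChain_subtree_chainTree (k : ℕ) (p : List Bool) {l : List Bool} (hl : l.length = k) :
    (bitChain ((l ++ p) ++ (l ++ p))).Subtree (chainTree k p) := by
  induction k generalizing p l with
  | zero => simp_all [chainTree, Subtree.refl]
  | succ k ih =>
    obtain ⟨l, x, rfl⟩ := (List.eq_nil_or_concat' l).resolve_left (by rintro rfl; simp at hl)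
    have hsub := ih (x :: p) (l := l) (by simpa using hl)
    simp only [List.append_assoc, List.singleton_append] at hsub ⊢
    cases x <;> exact .child (by simp) hsub

theorem le_size_chainTree_add_one (k : ℕ) (p : List Bool) :
    2 ^ k * (2 * (k + p.length) + 2) ≤ (chainTree k p).size + 1 := by
  induction k generalizing p with
  | zero => simpa [chainTree, two_mul] using length_lt_size_bitChain (p ++ p)
  | succ k ih =>
    have h₀ := ih (false :: p)
    have h₁ := ih (true :: p)
    simp only [chainTree, size_node, List.map_cons, List.map_nil, List.sum_cons, List.sum_nil,
      List.length_cons, pow_succ] at h₀ h₁ ⊢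
    nlinarith

theorem size_chainTree_add_one_le (k : ℕ) (p : List Bool) :
    (chainTree k p).size + 1 ≤ 2 ^ k * (4 * (k + p.length) + 2) := by
  induction k generalizing p with
  | zero =>
    have := size_bitChain_le (p ++ p)
    simp only [chainTree, List.length_append] at this ⊢
    omega
  | succ k ih =>
    have h₀ := ih (false :: p)
    have h₁ := ih (true :: p)
    simp only [chainTree, size_node, List.map_cons, List.map_nil, List.sum_cons, List.sum_nil,
      List.length_cons, pow_succ] at h₀ h₁ ⊢
    nlinarith [Nat.one_le_two_pow (n := k)]

theorem depth_chainTree (k : ℕ) (p : List Bool) :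
    (chainTree k p).depth = 3 * k + 2 * p.length := by
  induction k generalizing p with
  | zero => simp [chainTree, depth_bitChain, two_mul]
  | succ k ih => simp only [chainTree, depth_node, List.map_cons, List.map_nil, List.foldr_cons,
    List.foldr_nil, ih, List.length_cons]; omega

theorem mul_two_pow_le_ncard_subtree_chainTree (m : ℕ) :
    m * 2 ^ m ≤ {s : RTree ABC | s.Subtree (chainTree m [])}.ncard := by
  let suffix : Fin m × (Fin m → Bool) → RTree ABC :=
    fun q => bitChain ((List.ofFn q.2).drop q.1 ++ List.ofFn q.2)
  have hinj : Function.Injective suffix := by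
    rintro ⟨i, u⟩ ⟨j, v⟩ h
    replace h := bitChain_injective h
    have hij : (i : ℕ) = j := by
      have := congrArg List.length h
      simp only [List.length_append, List.length_drop, List.length_ofFn] at this
      omega
    have huv : u = v := List.ofFn_injective (List.append_inj_right h (by simp [hij]))
    simp [Fin.ext hij, huv]
  have hsub : Set.range suffix ⊆ {s | s.Subtree (chainTree m [])} := by
    rintro _ ⟨⟨j, v⟩, rfl⟩
    have hdrop := List.drop_append_of_le_length (l₁ := List.ofFn v) (l₂ := List.ofFn v) (i := j)
      (by rw [List.length_ofFn]; exact j.is_lt.le)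
    have hleaf := bitChain_subtree_chainTree m [] (List.length_ofFn (f := v))
    rw [List.append_nil] at hleaf
    change (bitChain _).Subtree _
    rw [← hdrop]
    exact (bitChain_drop_subtree _ j).trans hleaf
  calc m * 2 ^ m = (Set.range suffix).ncard := by simp [Set.ncard_range_of_injective hinj]
    _ ≤ _ := Set.ncard_le_ncard hsub (finite_setOf_subtree _)

theorem exists_le_mul_two_pow (n : ℕ) : ∃ m, n ≤ m * 2 ^ m :=
  ⟨n, Nat.le_mul_of_pos_right n (Nat.two_pow_pos n)⟩

def levels (n : ℕ) : ℕ := Nat.find (exists_le_mul_two_pow n)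

theorem le_levels_mul_two_pow (n : ℕ) : n ≤ levels n * 2 ^ levels n :=
  Nat.find_spec (exists_le_mul_two_pow n)

theorem two_le_levels {n : ℕ} (hn : 3 ≤ n) : 2 ≤ levels n :=
  (Nat.le_find_iff _ _).2 fun m hm => by interval_cases m <;> omega

theorem levels_mul_two_pow_lt {n : ℕ} (hn : 3 ≤ n) : levels n * 2 ^ levels n < 4 * n := by
  obtain ⟨k, hk⟩ := Nat.exists_eq_add_of_le' (two_le_levels hn)
  have hprev : ¬n ≤ (k + 1) * 2 ^ (k + 1) :=
    Nat.find_min (exists_le_mul_two_pow n) (m := k + 1) (show k + 1 < levels n by omega)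
  rw [hk, pow_succ]
  nlinarith

theorem le_size_chainTree_levels (n : ℕ) : n ≤ (chainTree (levels n) []).size := by
  have hsize := le_size_chainTree_add_one (levels n) []
  rw [List.length_nil, add_zero] at hsize
  nlinarith [le_levels_mul_two_pow n, Nat.one_le_two_pow (n := levels n)]

theorem size_chainTree_levels_le {n : ℕ} (hn : 3 ≤ n) :
    (chainTree (levels n) []).size ≤ 20 * n := by
  have hsize := size_chainTree_add_one_le (levels n) []
  rw [List.length_nil, add_zero] at hsize
  nlinarith [levels_mul_two_pow_lt hn, two_le_levels hn, Nat.one_le_two_pow (n := levels n)]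

theorem logb_two_le_of_le_two_pow {n k : ℕ} (hn : 0 < n) (h : n ≤ 2 ^ k) :
    Real.logb 2 n ≤ k := by
  rw [Real.logb_le_iff_le_rpow one_lt_two (by positivity), Real.rpow_natCast]
  exact_mod_cast h

theorem le_logb_two_of_two_pow_le {n k : ℕ} (h : 2 ^ k ≤ n) : (k : ℝ) ≤ Real.logb 2 n := by
  have hn : (0 : ℝ) < n := by exact_mod_cast (Nat.two_pow_pos k).trans_le h
  rw [Real.le_logb_iff_rpow_le one_lt_two hn, Real.rpow_natCast]
  exact_mod_cast h

theorem logb_two_le_two_mul_levels {n : ℕ} (hn : 0 < n) : Real.logb 2 n ≤ 2 * levels n := by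
  have hle : n ≤ 2 ^ (2 * levels n) := by
    rw [two_mul, pow_add]
    exact (le_levels_mul_two_pow n).trans
      (Nat.mul_le_mul_right _ (Nat.lt_two_pow_self).le)
  exact_mod_cast logb_two_le_of_le_two_pow hn hle

theorem levels_le_two_mul_logb_two {n : ℕ} (hn : 3 ≤ n) : (levels n : ℝ) ≤ 2 * Real.logb 2 n := by
  have hle : 2 ^ levels n ≤ n ^ 2 := by
    have := levels_mul_two_pow_lt hn
    have := two_le_levels hn
    nlinarith
  have := le_logb_two_of_two_pow_le hle
  rwa [Nat.cast_pow, Real.logb_pow, Nat.cast_ofNat] at this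

/-- A family of trees of linear size and logarithmic depth
whose minimal dags have linear size (i.e. with linearly many pairwise distinct
subtrees). -/
theorem exists_shallow_trees_with_large_dag :
    ∃ (c₁ c₂ c₃ c₄ : ℝ), 0 < c₁ ∧ 0 < c₂ ∧ 0 < c₃ ∧ 0 < c₄ ∧
      ∃ t : ℕ → RTree ABC, (∀ n, (t n).WF ABC.rk) ∧
        ∃ n₀ : ℕ, ∀ n : ℕ, n₀ ≤ n →
          (c₁ * (n : ℝ) ≤ ((t n).size : ℝ) ∧ ((t n).size : ℝ) ≤ c₂ * (n : ℝ)) ∧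
          (c₃ * Real.logb 2 n ≤ ((t n).depth : ℝ) ∧
            ((t n).depth : ℝ) ≤ c₄ * Real.logb 2 n) ∧
          n ≤ {s : RTree ABC | s.Subtree (t n)}.ncard := by
  refine ⟨1, 20, 1, 6, one_pos, by norm_num, one_pos, by norm_num,
    fun n => chainTree (levels n) [], fun n => chainTree_wf _ _, 3, fun n hn => ?_⟩
  have hlog := logb_two_le_two_mul_levels (n := n) (by omega)
  have hlevels := levels_le_two_mul_logb_two hn
  simp only [depth_chainTree, List.length_nil, mul_zero, add_zero, Nat.cast_mul, Nat.cast_ofNat]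
  refine ⟨⟨?_, ?_⟩, ⟨?_, ?_⟩, ?_⟩
  · exact_mod_cast (one_mul n).trans_le (le_size_chainTree_levels n)
  · exact_mod_cast size_chainTree_levels_le hn
  · linarith [(levels n).cast_nonneg (α := ℝ)]
  · linarith
  · exact (le_levels_mul_two_pow n).trans (mul_two_pow_le_ncard_subtree_chainTree _)
end

section
/- There exists an absolute constant C > 0 such that: for every m ≥ 1 and every monadic TSLP H over Σ_m all of whose productions have one of the forms A → B(C); A(x) → B(C(x)); A → f(B,C) with f ∈ {+,·}; A(x) → f(x,B) or A(x) → f(B,x) with f ∈ {+,·}; A → a with a ∈ {0, 1, y₁, …, y_m}; A(x) → B(x); A(x) → x, there exists an arithmetical circuit D over Σ_m of size at most C·|H| and depth at most C·depth(H) such that for every semiring S and every valuation ν : {y₁,…,y_m} → S, the circuit D evaluates in S under ν to the same element as the tree val(H). -/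
universe u v

namespace RTree

def map {L : Type u} {L' : Type v} (g : L → L') : RTree L → RTree L'
  | .node f ts => .node (g f) (ts.attach.map (fun x => x.1.map g))
termination_by t => sizeOf t
decreasing_by simp_wf; have := List.sizeOf_lt_of_mem x.2; omega

/-- Number of non-parameter nodes of a tree whose leaves may be labelled with
parameters (the right summand `ℕ` is the set of parameters). -/
def psize {L : Type u} : RTree (L ⊕ ℕ) → ℕ
  | .node (Sum.inl _) ts => 1 + (ts.attach.map (fun x => x.1.psize)).sum
  | .node (Sum.inr _) ts => (ts.attach.map (fun x => x.1.psize)).sum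
termination_by t => sizeOf t
decreasing_by all_goals (simp_wf; have := List.sizeOf_lt_of_mem x.2; omega)

/-- The list of parameters occurring in a tree, in depth-first left-to-right order. -/
def paramList {L : Type u} : RTree (L ⊕ ℕ) → List ℕ
  | .node (Sum.inl _) ts => (ts.attach.map (fun x => x.1.paramList)).flatten
  | .node (Sum.inr i) _ => [i]
termination_by t => sizeOf t
decreasing_by simp_wf; have := List.sizeOf_lt_of_mem x.2; omega

/-- Substitution of trees for parameters. -/
def subst {L : Type u} (g : ℕ → RTree (L ⊕ ℕ)) : RTree (L ⊕ ℕ) → RTree (L ⊕ ℕ)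
  | .node (Sum.inl a) ts => .node (Sum.inl a) (ts.attach.map (fun x => x.1.subst g))
  | .node (Sum.inr i) _ => g i
termination_by t => sizeOf t
decreasing_by simp_wf; have := List.sizeOf_lt_of_mem x.2; omega

/-- The tree consisting of a single node labelled with parameter `i`. -/
def param {L : Type u} (i : ℕ) : RTree (L ⊕ ℕ) := .node (Sum.inr i) []

end RTree

/-- Expansion of a pattern over nonterminals `ν`, terminals `L` and parameters,
given already-computed values `vals` for the nonterminals.  A node labelled with
a nonterminal `B` is replaced by `vals B`, with the parameters of `vals B`
substituted by the expansions of the children of the node. -/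
def expandPat {ν : Type} {L : Type u} (vals : ν → RTree (L ⊕ ℕ)) :
    RTree ((ν ⊕ L) ⊕ ℕ) → RTree (L ⊕ ℕ)
  | .node (Sum.inr i) _ => RTree.param i
  | .node (Sum.inl (Sum.inr f)) ts =>
      .node (Sum.inl f) (ts.attach.map (fun x => expandPat vals x.1))
  | .node (Sum.inl (Sum.inl B)) ts =>
      RTree.subst
        (fun i => (ts.attach.map (fun x => expandPat vals x.1)).getD i (RTree.param 0))
        (vals B)
termination_by t => sizeOf t
decreasing_by all_goals (simp_wf; have := List.sizeOf_lt_of_mem x.2; omega)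

/-- A tree straight-line program (TSLP) over the ranked terminal alphabet
`(L, rkL)`.  Nonterminals are `Fin N`, each of a given rank; parameters are
numbered starting from `0`; for every nonterminal there is exactly one rule,
whose right-hand side is a well-formed valid pattern (every parameter
`0, …, rank − 1` occurs exactly once, in left-to-right order), and the
"occurs in the right-hand side of" relation between nonterminals is acyclic. -/
structure TSLP (L : Type u) (rkL : L → ℕ) where
  N : ℕ
  rkN : Fin N → ℕ
  start : Fin N
  start_rank : rkN start = 0
  rhs : Fin N → RTree ((Fin N ⊕ L) ⊕ ℕ)
  rhs_wf : ∀ A, (rhs A).WF (fun l =>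
    match l with
    | Sum.inl (Sum.inl B) => rkN B
    | Sum.inl (Sum.inr f) => rkL f
    | Sum.inr _ => 0)
  rhs_valid : ∀ A, (rhs A).paramList = List.range (rkN A)
  acyclic : ∃ ord : Fin N → ℕ,
    ∀ A B, (Sum.inl (Sum.inl B)) ∈ (rhs A).labelsList → ord B < ord A

namespace TSLP

variable {L : Type u} {rkL : L → ℕ}

/-- Fuel-based evaluation of a nonterminal of a TSLP. -/
def valFuel (G : TSLP L rkL) : ℕ → Fin G.N → RTree (L ⊕ ℕ)
  | 0, _ => RTree.param 0
  | fuel+1, A => expandPat (G.valFuel fuel) (G.rhs A)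

/-- The valid pattern derived from nonterminal `A`.  By acyclicity, any chain of
nested nonterminal occurrences has length at most `G.N`, so fuel `G.N`
fully expands every nonterminal. -/
def valN (G : TSLP L rkL) (A : Fin G.N) : RTree (L ⊕ ℕ) := G.valFuel G.N A

/-- The tree derived from the start nonterminal. -/
def val (G : TSLP L rkL) : RTree (L ⊕ ℕ) := G.valN G.start

/-- The size of a TSLP: the total number of non-parameter nodes in all
right-hand sides. -/
def size (G : TSLP L rkL) : ℕ := ∑ A : Fin G.N, (G.rhs A).psize

/-- The list of nonterminals occurring in a pattern. -/
def ntList {ν : Type} {L' : Type u} (t : RTree ((ν ⊕ L') ⊕ ℕ)) : List ν :=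
  t.labelsList.filterMap (fun l =>
    match l with
    | Sum.inl (Sum.inl B) => some B
    | _ => none)

/-- Fuel-based depth of the derivation tree below a nonterminal: the children
of a node labelled `A` are the occurrences of nonterminals in the
right-hand side of `A`. -/
def ddepthFuel (G : TSLP L rkL) : ℕ → Fin G.N → ℕ
  | 0, _ => 0
  | fuel+1, A => ((ntList (G.rhs A)).map (fun B => G.ddepthFuel fuel B + 1)).foldr max 0

/-- The depth of the derivation tree of a TSLP. -/
def depth (G : TSLP L rkL) : ℕ := G.ddepthFuel G.N G.start

end TSLP

/-- The ranked alphabet `Σ_m`: two binary symbols `+` and `·`, and the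
rank-`0` symbols `0`, `1`, `y₁, …, y_m`. -/
inductive ArSym (m : ℕ) : Type
  | add | mul | zero | one | var (i : Fin m)

/-- The rank function of `Σ_m`. -/
def ArSym.rk {m : ℕ} : ArSym m → ℕ
  | .add => 2
  | .mul => 2
  | _ => 0

/-- A pattern node labelled with a nonterminal. -/
def ntNode {ν : Type} {L : Type} (B : ν) (ts : List (RTree ((ν ⊕ L) ⊕ ℕ))) :
    RTree ((ν ⊕ L) ⊕ ℕ) := .node (Sum.inl (Sum.inl B)) ts

/-- A pattern node labelled with a terminal. -/
def tmNode {ν : Type} {L : Type} (f : L) (ts : List (RTree ((ν ⊕ L) ⊕ ℕ))) :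
    RTree ((ν ⊕ L) ⊕ ℕ) := .node (Sum.inl (Sum.inr f)) ts

/-- The production of the nonterminal `A` has one of the forms `A → B(C)`;
`A(x) → B(C(x))`; `A → f(B,C)` with `f ∈ {+,·}`; `A(x) → f(x,B)` or
`A(x) → f(B,x)` with `f ∈ {+,·}`; `A → a` with `a ∈ {0, 1, y₁, …, y_m}`;
`A(x) → B(x)`; `A(x) → x`. -/
def GoodRule {m : ℕ} (H : TSLP (ArSym m) ArSym.rk) (A : Fin H.N) : Prop :=
  (∃ B C, H.rhs A = ntNode B [ntNode C []]) ∨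
  (∃ B C, H.rhs A = ntNode B [ntNode C [RTree.param 0]]) ∨
  (∃ f B C, (f = ArSym.add ∨ f = ArSym.mul) ∧
    H.rhs A = tmNode f [ntNode B [], ntNode C []]) ∨
  (∃ f B, (f = ArSym.add ∨ f = ArSym.mul) ∧
    (H.rhs A = tmNode f [RTree.param 0, ntNode B []] ∨
     H.rhs A = tmNode f [ntNode B [], RTree.param 0])) ∨
  (∃ a : ArSym m, (a = ArSym.zero ∨ a = ArSym.one ∨ ∃ i, a = ArSym.var i) ∧
    H.rhs A = tmNode a []) ∨
  (∃ B, H.rhs A = ntNode B [RTree.param 0]) ∨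
  (H.rhs A = RTree.param 0)

/-- Evaluation of a tree over `Σ_m` extended by parameters in a (not
necessarily commutative) semiring `S`, under a valuation `ν` of the variables
and a valuation `ρ` of the parameters.  (For ill-formed trees missing
arguments are given junk default values.) -/
def evalPar {m : ℕ} {S : Type} [AddCommMonoid S] [Monoid S]
    (ν : Fin m → S) (ρ : ℕ → S) : RTree (ArSym m ⊕ ℕ) → S
  | .node (Sum.inr i) _ => ρ i
  | .node (Sum.inl f) ts =>
    let es := ts.attach.map (fun x => evalPar ν ρ x.1)
    match f with
    | .add => es.getD 0 0 + es.getD 1 0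
    | .mul => es.getD 0 1 * es.getD 1 1
    | .zero => 0
    | .one => 1
    | .var i => ν i
termination_by t => sizeOf t
decreasing_by simp_wf; have := List.sizeOf_lt_of_mem x.2; omega

/-- Labels of leaf gates of an arithmetical circuit: `0`, `1`, or one of the
variables `y₁, …, y_m`. -/
inductive ALeaf (m : ℕ) : Type
  | zero | one | var (i : Fin m)

/-- An arithmetical circuit over `Σ_m`: a finite rooted directed acyclic graph
whose internal gates are labelled `+` (encoded `true`) or `·` (encoded
`false`) and have two ordered successors, and whose leaf gates are labelled
`0`, `1` or a variable `y_i`.  Its size is the number `size` of gates. -/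
structure Circuit (m : ℕ) where
  size : ℕ
  out : Fin size
  gate : Fin size → (Bool × Fin size × Fin size) ⊕ ALeaf m
  acyclic : ∃ ord : Fin size → ℕ,
    ∀ g b l r, gate g = Sum.inl (b, l, r) → ord l < ord g ∧ ord r < ord g

namespace Circuit

/-- Fuel-based evaluation of a gate in a (not necessarily commutative)
semiring. -/
def evalFuel {m : ℕ} {S : Type} [AddCommMonoid S] [Monoid S] (D : Circuit m)
    (ν : Fin m → S) : ℕ → Fin D.size → S
  | 0, _ => 0
  | fuel+1, g =>
    match D.gate g with
    | Sum.inl (b, l, r) =>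
        if b then D.evalFuel ν fuel l + D.evalFuel ν fuel r
        else D.evalFuel ν fuel l * D.evalFuel ν fuel r
    | Sum.inr .zero => 0
    | Sum.inr .one => 1
    | Sum.inr (.var i) => ν i

/-- The value of the circuit:  by acyclicity, any path in the circuit has
length less than `D.size`, so fuel `D.size` fully evaluates the output
gate. -/
def eval {m : ℕ} {S : Type} [AddCommMonoid S] [Monoid S] (D : Circuit m)
    (ν : Fin m → S) : S := D.evalFuel ν D.size D.out

/-- Fuel-based depth of a gate. -/
def depthFuel {m : ℕ} (D : Circuit m) : ℕ → Fin D.size → ℕ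
  | 0, _ => 0
  | fuel+1, g =>
    match D.gate g with
    | Sum.inl (_, l, r) => 1 + max (D.depthFuel fuel l) (D.depthFuel fuel r)
    | Sum.inr _ => 0

/-- The depth of the circuit: the length of a longest path from the output
gate to a leaf gate. -/
def depth {m : ℕ} (D : Circuit m) : ℕ := D.depthFuel D.size D.out

end Circuit

/-!
Over a semiring in which multiplication need not commute and `0` need not absorb, the tree
derived from a nonterminal `A` of rank `1` evaluates, as a function of its parameter `x`, to
`a * x * b + c` for constants `a, b, c`, and one of rank `0` to a constant `c`. Every rule form
computes the coefficients of `A` from those of the nonterminals on its right-hand side with at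
most five operations; for `A(x) → B(C(x))`, say, `a = a_B a_C`, `b = b_C b_B` and
`c = (a_B c_C) b_B + c_B`. So a block of five gates per nonterminal, together with constant
gates `0` and `1`, computes all coefficients, each block at most four levels above the blocks it
reads. Rules `A(x) → x` need no block (`a = b = 1`, `c = 0`), and every other rule has a
nonempty right-hand side, which pays for its block: the circuit has at most `2 + 5|H| ≤ 7|H|`
gates and depth at most `4 depth(H)`.
-/

namespace RTree

variable {L : Type u}

@[elab_as_elim]
theorem node_induction {P : RTree L → Prop}
    (node : ∀ f ts, (∀ t ∈ ts, P t) → P (.node f ts)) : ∀ t, P t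
  | .node f ts => node f ts fun t _ => node_induction node t
termination_by t => sizeOf t
decreasing_by rename_i ht; simp_wf; have := List.sizeOf_lt_of_mem ht; omega

theorem wf_node_iff {rk : L → ℕ} {f : L} {ts : List (RTree L)} :
    (RTree.node f ts).WF rk ↔ rk f = ts.length ∧ ∀ t ∈ ts, t.WF rk :=
  ⟨fun | .node hlen hts => ⟨hlen.symm, hts⟩, fun ⟨hlen, hts⟩ => .node hlen.symm hts⟩

@[simp]
theorem labelsList_node (f : L) (ts : List (RTree L)) :
    (RTree.node f ts).labelsList = f :: (ts.map labelsList).flatten := by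
  rw [labelsList]; simp

@[simp]
theorem psize_inl (a : L) (ts : List (RTree (L ⊕ ℕ))) :
    (RTree.node (.inl a) ts).psize = 1 + (ts.map psize).sum := by
  rw [psize]; simp

@[simp]
theorem paramList_inl (a : L) (ts : List (RTree (L ⊕ ℕ))) :
    (RTree.node (.inl a) ts).paramList = (ts.map paramList).flatten := by
  rw [paramList]; simp

@[simp]
theorem paramList_inr (i : ℕ) (ts : List (RTree (L ⊕ ℕ))) :
    (RTree.node (.inr i) ts).paramList = [i] := by
  rw [paramList]

@[simp]
theorem subst_inl (g : ℕ → RTree (L ⊕ ℕ)) (a : L) (ts : List (RTree (L ⊕ ℕ))) :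
    (RTree.node (.inl a) ts).subst g = .node (.inl a) (ts.map (subst g)) := by
  rw [subst]; simp

@[simp]
theorem subst_inr (g : ℕ → RTree (L ⊕ ℕ)) (i : ℕ) (ts : List (RTree (L ⊕ ℕ))) :
    (RTree.node (.inr i) ts).subst g = g i := by
  rw [subst]

end RTree

section Expansion

variable {ν : Type} {L : Type u} (vals : ν → RTree (L ⊕ ℕ))

@[simp]
theorem expandPat_param (i : ℕ) : expandPat vals (RTree.param i) = RTree.param i := by
  rw [RTree.param, expandPat]

@[simp]
theorem expandPat_terminal (f : L) (ts : List (RTree ((ν ⊕ L) ⊕ ℕ))) :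
    expandPat vals (.node (.inl (.inr f)) ts) = .node (.inl f) (ts.map (expandPat vals)) := by
  rw [expandPat]; simp

@[simp]
theorem expandPat_nonterminal (B : ν) (ts : List (RTree ((ν ⊕ L) ⊕ ℕ))) :
    expandPat vals (.node (.inl (.inl B)) ts) =
      (vals B).subst fun i => (ts.map (expandPat vals)).getD i (RTree.param 0) := by
  rw [expandPat]; simp

end Expansion

section Evaluation

variable {m : ℕ} {S : Type} [AddCommMonoid S] [Monoid S] (ν : Fin m → S) (ρ : ℕ → S)

/-- The operation denoted by a symbol of `Σ_m`, with the junk defaults of `evalPar`. -/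
def ArSym.interp : ArSym m → List S → S
  | .add, es => es.getD 0 0 + es.getD 1 0
  | .mul, es => es.getD 0 1 * es.getD 1 1
  | .zero, _ => 0
  | .one, _ => 1
  | .var i, _ => ν i

theorem evalPar_inl (f : ArSym m) (ts : List (RTree (ArSym m ⊕ ℕ))) :
    evalPar ν ρ (.node (.inl f) ts) = f.interp ν (ts.map (evalPar ν ρ)) := by
  rw [evalPar.eq_def]; cases f <;> simp [ArSym.interp]

@[simp]
theorem evalPar_inr (i : ℕ) (ts : List (RTree (ArSym m ⊕ ℕ))) :
    evalPar ν ρ (.node (.inr i) ts) = ρ i := by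
  rw [evalPar.eq_def]

@[simp]
theorem evalPar_param (i : ℕ) : evalPar ν ρ (RTree.param i) = ρ i :=
  evalPar_inr ν ρ i []

theorem evalPar_subst (g : ℕ → RTree (ArSym m ⊕ ℕ)) (t : RTree (ArSym m ⊕ ℕ)) :
    evalPar ν ρ (t.subst g) = evalPar ν (fun i => evalPar ν ρ (g i)) t := by
  induction t using RTree.node_induction with
  | node l ts ih =>
    rcases l with f | i
    · rw [RTree.subst_inl, evalPar_inl, evalPar_inl, List.map_map]
      exact congrArg _ (List.map_congr_left ih)
    · rw [RTree.subst_inr, evalPar_inr]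

end Evaluation

section RankBelow

variable {α : Type*} [Fintype α] (ord : α → ℕ)

def rankBelow (a : α) : ℕ := (Finset.univ.filter fun b => ord b < ord a).card

theorem rankBelow_lt_card (a : α) : rankBelow ord a < Fintype.card α :=
  Finset.card_lt_card (Finset.filter_ssubset.2 ⟨a, Finset.mem_univ a, lt_irrefl _⟩)

theorem rankBelow_lt_rankBelow {a b : α} (h : ord b < ord a) : rankBelow ord b < rankBelow ord a :=
  Finset.card_lt_card <| (Finset.ssubset_iff_of_subset fun c hc => by
    simp only [Finset.mem_filter, Finset.mem_univ, true_and] at hc ⊢; omega).2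
    ⟨b, by simpa using h, by simp⟩

end RankBelow

abbrev GateLabel (m : ℕ) (G : Type) : Type := (Bool × G × G) ⊕ ALeaf m

namespace GateLabel

variable {m : ℕ} {G G' : Type} {S : Type} [AddCommMonoid S] [Monoid S]

def inputs : GateLabel m G → List G
  | .inl (_, l, r) => [l, r]
  | .inr _ => []

def add (l r : G) : GateLabel m G := .inl (true, l, r)

def mul (l r : G) : GateLabel m G := .inl (false, l, r)

def map (e : G → G') : GateLabel m G → GateLabel m G' := Sum.map (Prod.map id (Prod.map e e)) id

def eval (v : G → S) (ν : Fin m → S) : GateLabel m G → S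
  | .inl (b, l, r) => if b then v l + v r else v l * v r
  | .inr .zero => 0
  | .inr .one => 1
  | .inr (.var i) => ν i

def depth (d : G → ℕ) : GateLabel m G → ℕ
  | .inl (_, l, r) => 1 + max (d l) (d r)
  | .inr _ => 0

theorem eval_congr {v v' : G → S} (ν : Fin m → S) {x : GateLabel m G}
    (h : ∀ c ∈ x.inputs, v c = v' c) : x.eval v ν = x.eval v' ν := by
  rcases x with ⟨b, l, r⟩ | a
  · simp only [inputs, List.mem_cons, List.not_mem_nil, or_false, forall_eq_or_imp,
      forall_eq] at h
    simp [eval, h.1, h.2]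
  · cases a <;> rfl

theorem depth_congr {d d' : G → ℕ} {x : GateLabel m G}
    (h : ∀ c ∈ x.inputs, d c = d' c) : x.depth d = x.depth d' := by
  rcases x with ⟨b, l, r⟩ | a
  · simp only [inputs, List.mem_cons, List.not_mem_nil, or_false, forall_eq_or_imp,
      forall_eq] at h
    simp [depth, h.1, h.2]
  · rfl

@[simp]
theorem eval_map (e : G → G') (v : G' → S) (ν : Fin m → S) (x : GateLabel m G) :
    (x.map e).eval v ν = x.eval (v ∘ e) ν := by
  rcases x with ⟨b, l, r⟩ | a
  · rfl
  · cases a <;> rfl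

@[simp]
theorem depth_map (e : G → G') (d : G' → ℕ) (x : GateLabel m G) :
    (x.map e).depth d = x.depth (d ∘ e) := by
  rcases x with ⟨b, l, r⟩ | a <;> rfl

end GateLabel

namespace Circuit

variable {m : ℕ} (D : Circuit m) {S : Type} [AddCommMonoid S] [Monoid S] (ν : Fin m → S)

def valueAt (g : Fin D.size) : S := D.evalFuel ν D.size g

def depthAt (g : Fin D.size) : ℕ := D.depthFuel D.size g

noncomputable def rank (g : Fin D.size) : ℕ := rankBelow D.acyclic.choose g

theorem rank_lt_size (g : Fin D.size) : D.rank g < D.size :=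
  (rankBelow_lt_card _ g).trans_eq (Fintype.card_fin _)

theorem rank_lt_of_mem_inputs {g c : Fin D.size} (hc : c ∈ GateLabel.inputs (D.gate g)) :
    D.rank c < D.rank g := by
  apply rankBelow_lt_rankBelow
  cases hg : D.gate g with
  | inl x =>
    obtain ⟨b, l, r⟩ := x
    have := D.acyclic.choose_spec g b l r hg
    rw [hg] at hc
    simp only [GateLabel.inputs, List.mem_cons, List.not_mem_nil, or_false] at hc
    rcases hc with rfl | rfl <;> simp [this]
  | inr a => rw [hg] at hc; simp [GateLabel.inputs] at hc

/-- Fuel `D.size` suffices for a fuel-indexed recursion along the wires: a wire from `g` only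
leads to gates of smaller `rank`, and `rank g < D.size`. -/
theorem fuel_fixpoint {β : Type*} (step : (Fin D.size → β) → GateLabel m (Fin D.size) → β)
    (hstep : ∀ v v' x, (∀ c ∈ GateLabel.inputs x, v c = v' c) → step v x = step v' x)
    (F : ℕ → Fin D.size → β) (hF : ∀ k g, F (k + 1) g = step (F k) (D.gate g))
    (g : Fin D.size) : F D.size g = step (F D.size) (D.gate g) := by
  have stable : ∀ k k' g, D.rank g < k → D.rank g < k' → F k g = F k' g := by
    intro k
    induction k with
    | zero => intro _ _ h; omega
    | succ k ih =>
      rintro (_ | k') g hk hk'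
      · omega
      rw [hF, hF]
      exact hstep _ _ _ fun c hc =>
        have := D.rank_lt_of_mem_inputs hc
        ih k' c (by omega) (by omega)
  obtain ⟨k, hk⟩ : ∃ k, D.size = k + 1 := ⟨D.size - 1, by have := g.2; omega⟩
  rw [hk, hF]
  exact hstep _ _ _ fun c hc =>
    have := D.rank_lt_of_mem_inputs hc
    have := D.rank_lt_size g
    stable k (k + 1) c (by omega) (by omega)

theorem valueAt_eq (g : Fin D.size) :
    D.valueAt ν g = GateLabel.eval (D.valueAt ν) ν (D.gate g) := by
  refine D.fuel_fixpoint (fun v x => x.eval v ν) (fun _ _ _ h => GateLabel.eval_congr ν h)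
    (D.evalFuel ν) (fun k g => ?_) g
  rw [evalFuel]
  rcases D.gate g with ⟨b, l, r⟩ | a
  · rfl
  · cases a <;> rfl

theorem depthAt_eq (g : Fin D.size) :
    D.depthAt g = GateLabel.depth D.depthAt (D.gate g) := by
  refine D.fuel_fixpoint (fun d x => x.depth d) (fun _ _ _ h => GateLabel.depth_congr h)
    D.depthFuel (fun k g => ?_) g
  rw [depthFuel]
  rcases D.gate g with ⟨b, l, r⟩ | a <;> rfl

def ofEquiv {G : Type} {n : ℕ} (e : G ≃ Fin n) (gate : G → GateLabel m G) (out : G)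
    (ord : G → ℕ) (hord : ∀ g, ∀ c ∈ (gate g).inputs, ord c < ord g) : Circuit m where
  size := n
  out := e out
  gate i := (gate (e.symm i)).map e
  acyclic := ⟨ord ∘ e.symm, fun i b l r h => by
    have hin := hord (e.symm i)
    cases hg : gate (e.symm i) with
    | inl x =>
      rw [hg] at h hin
      cases h
      simpa [GateLabel.inputs] using hin
    | inr a => rw [hg] at h; cases h⟩

section OfEquiv

variable {G : Type} {n : ℕ} (e : G ≃ Fin n) (gate : G → GateLabel m G) (out : G)
  (ord : G → ℕ) (hord : ∀ g, ∀ c ∈ (gate g).inputs, ord c < ord g)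

theorem ofEquiv_valueAt (g : G) :
    (ofEquiv e gate out ord hord).valueAt ν (e g) =
      (gate g).eval (fun h => (ofEquiv e gate out ord hord).valueAt ν (e h)) ν := by
  refine (valueAt_eq _ ν _).trans ?_
  simp [ofEquiv, Function.comp_def]

theorem ofEquiv_depthAt (g : G) :
    (ofEquiv e gate out ord hord).depthAt (e g) =
      (gate g).depth (fun h => (ofEquiv e gate out ord hord).depthAt (e h)) := by
  refine (depthAt_eq _ _).trans ?_
  simp [ofEquiv, Function.comp_def]

end OfEquiv

end Circuit

namespace TSLP

variable {L : Type u} {rkL : L → ℕ} (G : TSLP L rkL)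

noncomputable def rank (A : Fin G.N) : ℕ := rankBelow G.acyclic.choose A

theorem rank_lt_N (A : Fin G.N) : G.rank A < G.N :=
  (rankBelow_lt_card _ A).trans_eq (Fintype.card_fin _)

theorem mem_ntList {ν : Type} {L' : Type u} {t : RTree ((ν ⊕ L') ⊕ ℕ)} {B : ν} :
    B ∈ ntList t ↔ .inl (.inl B) ∈ t.labelsList := by
  simp only [ntList, List.mem_filterMap]
  constructor
  · rintro ⟨(⟨B' | f⟩ | i), hl, h⟩ <;> simp_all
  · exact fun h => ⟨_, h, rfl⟩

theorem rank_lt_of_mem_ntList {A B : Fin G.N} (h : B ∈ ntList (G.rhs A)) :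
    G.rank B < G.rank A :=
  rankBelow_lt_rankBelow _ (G.acyclic.choose_spec A B (mem_ntList.1 h))

theorem ddepthFuel_lt_of_mem_ntList {A B : Fin G.N} (h : B ∈ ntList (G.rhs A)) (f : ℕ) :
    G.ddepthFuel f B < G.ddepthFuel (f + 1) A := by
  rw [ddepthFuel]
  exact List.le_max_of_le' 0 (List.mem_map_of_mem (f := fun B => G.ddepthFuel f B + 1) h) le_rfl

theorem rkN_eq_length_paramList (A : Fin G.N) : G.rkN A = (G.rhs A).paramList.length := by
  rw [G.rhs_valid, List.length_range]

end TSLP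

/-- The rule forms of `GoodRule`; `Shape.rhs` is the right-hand side. -/
inductive Shape (m N : ℕ) : Type
  | comp (B C : Fin N)
  | compParam (B C : Fin N)
  | op (isAdd : Bool) (B C : Fin N)
  | paramOp (isAdd : Bool) (B : Fin N)
  | opParam (isAdd : Bool) (B : Fin N)
  | const (a : ALeaf m)
  | chain (B : Fin N)
  | param

namespace Shape

variable {m N : ℕ}

def binSym (isAdd : Bool) : ArSym m := if isAdd then .add else .mul

def constSym : ALeaf m → ArSym m
  | .zero => .zero
  | .one => .one
  | .var i => .var i

def rhs : Shape m N → RTree ((Fin N ⊕ ArSym m) ⊕ ℕ)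
  | comp B C => ntNode B [ntNode C []]
  | compParam B C => ntNode B [ntNode C [RTree.param 0]]
  | op isAdd B C => tmNode (binSym isAdd) [ntNode B [], ntNode C []]
  | paramOp isAdd B => tmNode (binSym isAdd) [RTree.param 0, ntNode B []]
  | opParam isAdd B => tmNode (binSym isAdd) [ntNode B [], RTree.param 0]
  | const a => tmNode (constSym a) []
  | chain B => ntNode B [RTree.param 0]
  | param => RTree.param 0

def refs : Shape m N → List (Fin N)
  | comp B C | compParam B C | op _ B C => [B, C]
  | paramOp _ B | opParam _ B | chain B => [B]
  | const _ | param => []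

theorem ntList_rhs (s : Shape m N) : TSLP.ntList s.rhs = s.refs := by
  cases s <;> simp [rhs, refs, ntNode, tmNode, RTree.param, TSLP.ntList]

theorem psize_rhs_pos {s : Shape m N} (h : s ≠ param) : 0 < s.rhs.psize := by
  cases s <;> simp_all [rhs, ntNode, tmNode]

theorem exists_eq_rhs {H : TSLP (ArSym m) ArSym.rk} {A : Fin H.N} (h : GoodRule H A) :
    ∃ s : Shape m H.N, H.rhs A = s.rhs := by
  rcases h with ⟨B, C, h⟩ | ⟨B, C, h⟩ | ⟨f, B, C, hf, h⟩ | ⟨f, B, hf, h | h⟩ |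
    ⟨a, ha, h⟩ | ⟨B, h⟩ | h
  · exact ⟨comp B C, h⟩
  · exact ⟨compParam B C, h⟩
  · rcases hf with rfl | rfl
    exacts [⟨op true B C, h⟩, ⟨op false B C, h⟩]
  · rcases hf with rfl | rfl
    exacts [⟨paramOp true B, h⟩, ⟨paramOp false B, h⟩]
  · rcases hf with rfl | rfl
    exacts [⟨opParam true B, h⟩, ⟨opParam false B, h⟩]
  · rcases ha with rfl | rfl | ⟨i, rfl⟩
    exacts [⟨const .zero, h⟩, ⟨const .one, h⟩, ⟨const (.var i), h⟩]
  · exact ⟨chain B, h⟩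
  · exact ⟨param, h⟩

end Shape

/-- The gates of the block of a nonterminal `A`: the value of `A` on `x` is `a * x * b + c`
(just `c` if `A` has rank `0`); `p` and `q` are auxiliary gates of a composition. -/
inductive Slot : Type
  | a | b | c | p | q
  deriving DecidableEq

instance : Fintype Slot := ⟨{.a, .b, .c, .p, .q}, fun s => by cases s <;> simp⟩

theorem Slot.card : Fintype.card Slot = 5 := rfl

def Slot.weight : Slot → ℕ
  | .q => 2
  | .c => 3
  | _ => 1

namespace CircuitConstruction

open scoped Classical

noncomputable section

variable {m : ℕ} {H : TSLP (ArSym m) ArSym.rk} (σ : Fin H.N → Shape m H.N)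

abbrev Block : Type := {A : Fin H.N // σ A ≠ .param}

/-- `.inl true` and `.inl false` are the constant gates `1` and `0`. -/
abbrev Gate : Type := Bool ⊕ Block σ × Slot

/-- `g + 0`: a gate of its own with the value of `g`. -/
def copyOf (g : Gate σ) : GateLabel m (Gate σ) := .add g (.inl false)

/-- The gate holding the given coefficient of `A`; for `A(x) → x` the coefficients are
`a = b = 1` and `c = 0`. -/
def ref (A : Fin H.N) (s : Slot) : Gate σ :=
  if h : σ A = .param then .inl (match s with | .a | .b => true | _ => false)
  else .inr (⟨A, h⟩, s)

def blockLabel (A : Block σ) : Slot → GateLabel m (Gate σ) :=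
  match σ A.1 with
  | .comp B C | .compParam B C => fun
    | .a => .mul (ref σ B .a) (ref σ C .a)
    | .b => .mul (ref σ C .b) (ref σ B .b)
    | .p => .mul (ref σ B .a) (ref σ C .c)
    | .q => .mul (.inr (A, .p)) (ref σ B .b)
    | .c => .add (.inr (A, .q)) (ref σ B .c)
  | .op isAdd B C => fun
    | .c => .inl (isAdd, ref σ B .c, ref σ C .c)
    | _ => .inr .zero
  | .paramOp true B | .opParam true B => fun
    | .a | .b => .inr .one
    | .c => copyOf σ (ref σ B .c)
    | _ => .inr .zero
  | .paramOp false B => fun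
    | .a => .inr .one
    | .b => copyOf σ (ref σ B .c)
    | _ => .inr .zero
  | .opParam false B => fun
    | .a => copyOf σ (ref σ B .c)
    | .b => .inr .one
    | _ => .inr .zero
  | .const x => fun
    | .c => .inr x
    | _ => .inr .zero
  | .chain B => fun
    | .p | .q => .inr .zero
    | s => copyOf σ (ref σ B s)
  | .param => fun _ => .inr .zero

def gateLabel : Gate σ → GateLabel m (Gate σ)
  | .inl isOne => .inr (if isOne then .one else .zero)
  | .inr (A, s) => blockLabel σ A s

def gateOrd : Gate σ → ℕ
  | .inl _ => 0
  | .inr (A, s) => 4 * H.rank A + s.weight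

variable {σ}

theorem ref_of_ne_param {A : Fin H.N} (h : σ A ≠ .param) (s : Slot) :
    ref σ A s = .inr (⟨A, h⟩, s) :=
  dif_neg h

theorem ref_of_eq_param {A : Fin H.N} (h : σ A = .param) (s : Slot) :
    ref σ A s = .inl (match s with | .a | .b => true | _ => false) :=
  dif_pos h

theorem rank_lt_of_mem_refs (hσ : ∀ A, H.rhs A = (σ A).rhs) {A B : Fin H.N}
    (h : B ∈ (σ A).refs) : H.rank B < H.rank A :=
  H.rank_lt_of_mem_ntList (by rwa [hσ, Shape.ntList_rhs])

theorem ddepthFuel_lt_of_mem_refs (hσ : ∀ A, H.rhs A = (σ A).rhs) {A B : Fin H.N}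
    (h : B ∈ (σ A).refs) (f : ℕ) : H.ddepthFuel f B < H.ddepthFuel (f + 1) A :=
  H.ddepthFuel_lt_of_mem_ntList (by rwa [hσ, Shape.ntList_rhs]) f

theorem start_ne_param (hσ : ∀ A, H.rhs A = (σ A).rhs) : σ H.start ≠ .param := by
  intro h
  have := H.rkN_eq_length_paramList H.start
  simp [hσ, h, Shape.rhs, RTree.param, H.start_rank] at this

theorem card_block_le_size (hσ : ∀ A, H.rhs A = (σ A).rhs) :
    Fintype.card (Block σ) ≤ H.size := by
  rw [Fintype.card_subtype, Finset.card_eq_sum_ones, TSLP.size]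
  refine (Finset.sum_le_sum fun A hA => ?_).trans
    (Finset.sum_le_sum_of_subset (Finset.filter_subset _ _))
  rw [hσ]
  exact Shape.psize_rhs_pos (Finset.mem_filter.1 hA).2

theorem gateOrd_inl (isOne : Bool) : gateOrd σ (.inl isOne) = 0 := rfl

theorem gateOrd_inr (A : Block σ) (s : Slot) :
    gateOrd σ (.inr (A, s)) = 4 * H.rank A + s.weight := rfl

theorem gateOrd_ref_lt {A B : Fin H.N} (h : H.rank B < H.rank A) (s : Slot) {w : ℕ}
    (hw : 1 ≤ w) : gateOrd σ (ref σ B s) < 4 * H.rank A + w := by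
  unfold ref
  split
  · simp [gateOrd]; omega
  · cases s <;> simp [gateOrd, Slot.weight] <;> omega

theorem gateOrd_lt (hσ : ∀ A, H.rhs A = (σ A).rhs) (g : Gate σ) :
    ∀ c ∈ (gateLabel σ g).inputs, gateOrd σ c < gateOrd σ g := by
  rcases g with isOne | ⟨⟨A, hA⟩, s⟩
  · simp [gateLabel, GateLabel.inputs]
  rcases hs : σ A with _ | _ | _ | ⟨_ | _, _⟩ | ⟨_ | _, _⟩ | _ | _ | _ <;> cases s <;>
    simp only [gateLabel, blockLabel, hs, GateLabel.inputs, GateLabel.add, GateLabel.mul, copyOf,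
      List.mem_cons, List.not_mem_nil, or_false, forall_eq_or_imp, forall_eq, gateOrd_inr,
      gateOrd_inl, Slot.weight, IsEmpty.forall_iff, implies_true] <;>
    (try constructor) <;>
    first
    | omega
    | exact gateOrd_ref_lt (rank_lt_of_mem_refs hσ (by simp [hs, Shape.refs])) _ (by omega)

def circuitOf (hσ : ∀ A, H.rhs A = (σ A).rhs) : Circuit m :=
  Circuit.ofEquiv (Fintype.equivFin (Gate σ)) (gateLabel σ) (ref σ H.start .c) (gateOrd σ)
    (gateOrd_lt hσ)

section Semantics

variable (hσ : ∀ A, H.rhs A = (σ A).rhs) {S : Type} [AddCommMonoid S] [Monoid S]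
  (ν : Fin m → S)

def gateValue (g : Gate σ) : S := (circuitOf hσ).valueAt ν (Fintype.equivFin _ g)

theorem gateValue_inl (isOne : Bool) :
    gateValue hσ ν (.inl isOne) = if isOne then 1 else 0 := by
  unfold gateValue circuitOf
  rw [Circuit.ofEquiv_valueAt]
  cases isOne <;> rfl

theorem gateValue_inr (A : Block σ) (s : Slot) :
    gateValue hσ ν (.inr (A, s)) = (blockLabel σ A s).eval (gateValue hσ ν) ν := by
  unfold gateValue circuitOf
  rw [Circuit.ofEquiv_valueAt]
  rfl

theorem evalPar_valFuel (hdl : ∀ a b c : S, a * (b + c) = a * b + a * c)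
    (hdr : ∀ a b c : S, (a + b) * c = a * c + b * c) (f : ℕ) (A : Fin H.N)
    (hf : H.rank A < f) (ρ : ℕ → S) :
    evalPar ν ρ (H.valFuel f A) =
      if H.rkN A = 0 then gateValue hσ ν (ref σ A .c)
      else gateValue hσ ν (ref σ A .a) * ρ 0 * gateValue hσ ν (ref σ A .b) +
        gateValue hσ ν (ref σ A .c) := by
  induction f generalizing A ρ with
  | zero => omega
  | succ f ih =>
    have hrefs : ∀ B ∈ (σ A).refs, ∀ ρ, evalPar ν ρ (H.valFuel f B) = _ :=
      fun B hB => ih B (by have := rank_lt_of_mem_refs hσ hB; omega)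
    have hrk := H.rkN_eq_length_paramList A
    have hwf := H.rhs_wf A
    rw [hσ] at hrk hwf
    rw [TSLP.valFuel, hσ]
    rcases hs : σ A with
      _ | _ | ⟨_ | _, _, _⟩ | ⟨_ | _, _⟩ | ⟨_ | _, _⟩ | ⟨_ | _ | _⟩ | _ | _ <;>
      simp only [hs, Shape.refs, List.mem_cons, List.not_mem_nil, or_false, forall_eq_or_imp,
        forall_eq] at hrefs <;>
      simp [hs, Shape.rhs, Shape.binSym, ntNode, tmNode, RTree.param,
        RTree.wf_node_iff] at hrk hwf <;>
      simp [hs, Shape.rhs, Shape.binSym, Shape.constSym, ntNode, tmNode, evalPar_subst,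
        evalPar_inl, ArSym.interp, hrefs, hrk, hwf, ref_of_ne_param, ref_of_eq_param,
        gateValue_inr, gateValue_inl, blockLabel, GateLabel.eval, GateLabel.add, GateLabel.mul,
        copyOf] <;>
      first
      | exact add_comm _ _
      | (rw [hdl, hdr]; simp only [mul_assoc, add_assoc])

theorem circuitOf_eval (hdl : ∀ a b c : S, a * (b + c) = a * b + a * c)
    (hdr : ∀ a b c : S, (a + b) * c = a * c + b * c) :
    (circuitOf hσ).eval ν = evalPar ν (fun _ => 0) H.val := by
  rw [TSLP.val, TSLP.valN, evalPar_valFuel hσ ν hdl hdr _ _ (H.rank_lt_N _), if_pos H.start_rank]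
  rfl

end Semantics

section Bounds

variable (hσ : ∀ A, H.rhs A = (σ A).rhs)

def gateDepth (g : Gate σ) : ℕ := (circuitOf hσ).depthAt (Fintype.equivFin _ g)

theorem gateDepth_inl (isOne : Bool) : gateDepth hσ (.inl isOne) = 0 := by
  unfold gateDepth circuitOf
  rw [Circuit.ofEquiv_depthAt]
  rfl

theorem gateDepth_inr (A : Block σ) (s : Slot) :
    gateDepth hσ (.inr (A, s)) = (blockLabel σ A s).depth (gateDepth hσ) := by
  unfold gateDepth circuitOf
  rw [Circuit.ofEquiv_depthAt]
  rfl

theorem gateDepth_ref_le (f : ℕ) (A : Fin H.N) (hf : H.rank A < f) (s : Slot) :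
    gateDepth hσ (ref σ A s) ≤ 4 * H.ddepthFuel f A := by
  induction f generalizing A s with
  | zero => omega
  | succ f ih =>
    have hrefs : ∀ B ∈ (σ A).refs,
        gateDepth hσ (ref σ B .a) + 4 ≤ 4 * H.ddepthFuel (f + 1) A ∧
        gateDepth hσ (ref σ B .b) + 4 ≤ 4 * H.ddepthFuel (f + 1) A ∧
        gateDepth hσ (ref σ B .c) + 4 ≤ 4 * H.ddepthFuel (f + 1) A := fun B hB => by
      have := rank_lt_of_mem_refs hσ hB
      have := ddepthFuel_lt_of_mem_refs hσ hB f
      have := ih B (by omega)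
      grind
    rcases hs : σ A with
      _ | _ | ⟨_ | _, _, _⟩ | ⟨_ | _, _⟩ | ⟨_ | _, _⟩ | _ | _ | _ <;>
      simp only [hs, Shape.refs, List.mem_cons, List.not_mem_nil, or_false, forall_eq_or_imp,
        forall_eq] at hrefs <;>
      cases s <;>
      simp [hs, ref_of_ne_param, ref_of_eq_param, gateDepth_inr, gateDepth_inl, blockLabel,
        GateLabel.depth, GateLabel.add, GateLabel.mul, copyOf] <;>
      omega

theorem circuitOf_depth_le : (circuitOf hσ).depth ≤ 4 * H.depth :=
  gateDepth_ref_le hσ H.N H.start (H.rank_lt_N _) .c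

theorem circuitOf_size_le : (circuitOf hσ).size ≤ 7 * H.size := by
  have hsize : (circuitOf hσ).size = 2 + Fintype.card (Block σ) * 5 := by
    show Fintype.card (Gate σ) = _
    rw [Fintype.card_sum, Fintype.card_prod, Fintype.card_bool, Slot.card]
  have hpos : 0 < Fintype.card (Block σ) :=
    Fintype.card_pos_iff.2 ⟨⟨H.start, start_ne_param hσ⟩⟩
  have := card_block_le_size hσ
  omega

end Bounds

end

end CircuitConstruction

/-- Every monadic TSLP `H` over `Σ_m` whose productions
have the forms listed in `GoodRule` can be turned into an arithmetical
circuit of size `O(|H|)` and depth `O(depth H)` that evaluates, over every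
(not necessarily commutative) semiring and every valuation of the variables,
to the same element as the tree `val H`.  (Since the start nonterminal has
rank `0`, the tree `val H` contains no parameters, and it is evaluated via
`evalPar` with the junk parameter valuation `fun _ => 0`.) -/
theorem monadic_tslp_to_circuit :
    ∃ C : ℝ, 0 < C ∧
      ∀ (m : ℕ), 1 ≤ m →
        ∀ H : TSLP (ArSym m) ArSym.rk,
          (∀ A, H.rkN A ≤ 1) → (∀ A, GoodRule H A) →
          ∃ D : Circuit m,
            (D.size : ℝ) ≤ C * (H.size : ℝ) ∧
            (D.depth : ℝ) ≤ C * (H.depth : ℝ) ∧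
            ∀ (S : Type) [AddCommMonoid S] [Monoid S],
              (∀ a b c : S, a * (b + c) = a * b + a * c) →
              (∀ a b c : S, (a + b) * c = a * c + b * c) →
              ∀ ν : Fin m → S,
                D.eval ν = evalPar ν (fun _ => 0) H.val := by
  refine ⟨7, by norm_num, fun m _ H _ hgood => ?_⟩
  choose σ hσ using fun A => Shape.exists_eq_rhs (hgood A)
  refine ⟨CircuitConstruction.circuitOf hσ, ?_, ?_, fun S _ _ hdl hdr ν =>
    CircuitConstruction.circuitOf_eval hσ ν hdl hdr⟩
  · exact_mod_cast CircuitConstruction.circuitOf_size_le hσ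
  · exact_mod_cast (CircuitConstruction.circuitOf_depth_le hσ).trans (by omega)
end
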